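/- arXiv:1711.05933 — 2 statements merged into one kernel-verified Lean document; each statement's English description precedes it below -/
import Mathlib

section
/- There is an injective homomorphism Hom(Z, D) ⊕ Hom(H/A ⊗ K/A, D) → H²(G, D) whose image equals the kernel of the map (res, res) : H²(G, D) → H²(H, D) ⊕ H²(K, D) given by the two restriction homomorphisms. In particular, Hom(Z, D) ⊕ Hom(H/A ⊗ K/A, D) embeds into H²(G, D). -/
/-!
Setting (central products): `G` is a group with normal subgroups `H` and `K` such that
`G = HK` (i.e. `H ⊔ K = ⊤`) and `[H, K] = 1` (i.e. every element of `H` commutes with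
every element of `K`).  We set `A = H ⊓ K` and `Z = ⁅H,H⁆ ⊓ ⁅K,K⁆`; both are central
in `G`.  Coefficients are taken in a divisible abelian group `D`, regarded as a trivial
module.  Second cohomology `H2 X D` is realized concretely as (inhomogeneous)
2-cocycles modulo 2-coboundaries, and `Hom(X, D)` is realized as `Additive X →+ D`.
-/

open scoped TensorProduct

set_option maxHeartbeats 1000000
set_option synthInstance.maxHeartbeats 1000000
set_option synthInstance.maxSize 2000

namespace SchurCP

variable (G : Type) [Group G] (D : Type) [AddCommGroup D]

/-- The group of 2-cocycles on `G` with values in the trivial module `D`. -/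
def cocycles2 : AddSubgroup (G → G → D) where
  carrier := {f | ∀ g h k : G, f g h + f (g * h) k = f h k + f g (h * k)}
  zero_mem' := by intro g h k; simp
  add_mem' := by
    intro a b ha hb g h k
    simp only [Pi.add_apply]
    rw [add_add_add_comm, ha g h k, hb g h k, add_add_add_comm]
  neg_mem' := by
    intro a ha g h k
    simp only [Pi.neg_apply]
    rw [← neg_add, ← neg_add, ha g h k]

/-- The group of 2-coboundaries on `G` with values in the trivial module `D`. -/
def coboundaries2 : AddSubgroup (G → G → D) where
  carrier := {f | ∃ φ : G → D, ∀ g h : G, f g h = φ g + φ h - φ (g * h)}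
  zero_mem' := ⟨0, by simp⟩
  add_mem' := by
    rintro a b ⟨φ, hφ⟩ ⟨ψ, hψ⟩
    exact ⟨φ + ψ, fun g h => by simp only [Pi.add_apply, hφ g h, hψ g h]; abel⟩
  neg_mem' := by
    rintro a ⟨φ, hφ⟩
    exact ⟨-φ, fun g h => by simp only [Pi.neg_apply, hφ g h]; abel⟩

/-- The second cohomology group `H²(G, D)` of `G` with coefficients in the
trivial module `D`. -/
def H2 : Type := cocycles2 G D ⧸ (coboundaries2 G D).addSubgroupOf (cocycles2 G D)

instance : AddCommGroup (H2 G D) :=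
  QuotientAddGroup.Quotient.addCommGroup ((coboundaries2 G D).addSubgroupOf (cocycles2 G D))

variable {G D}

/-- The cohomology class of a 2-cocycle. -/
abbrev H2mk (f : cocycles2 G D) : H2 G D := QuotientAddGroup.mk f

/-- Pullback of a 2-cocycle along a group homomorphism. -/
def pullCocycle {G' : Type} [Group G'] (π : G' →* G) :
    cocycles2 G D →+ cocycles2 G' D where
  toFun f := ⟨fun x y => (f : G → G → D) (π x) (π y), by
    intro x y z
    simpa only [map_mul] using f.2 (π x) (π y) (π z)⟩
  map_zero' := rfl
  map_add' _ _ := rfl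

/-- The homomorphism `H²(G, D) → H²(G', D)` induced by a group homomorphism
`π : G' → G`; this specializes to restriction maps (for inclusions of subgroups)
and to inflation maps (for quotient maps). -/
def H2Map {G' : Type} [Group G'] (π : G' →* G) : H2 G D →+ H2 G' D :=
  QuotientAddGroup.map _ _ (pullCocycle π) (by
    intro f hf
    rw [AddSubgroup.mem_addSubgroupOf] at hf
    rw [AddSubgroup.mem_comap, AddSubgroup.mem_addSubgroupOf]
    obtain ⟨φ, hφ⟩ := hf
    exact ⟨fun x => φ (π x), fun x y => by
      show (f : G → G → D) (π x) (π y) = _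
      rw [hφ (π x) (π y), ← map_mul]⟩)

theorem commutator_le_self {X : Type} [Group X] (H : Subgroup X) : ⁅H, H⁆ ≤ H := by
  rw [Subgroup.commutator_le]
  intro g₁ h₁ g₂ h₂
  rw [commutatorElement_def]
  exact H.mul_mem (H.mul_mem (H.mul_mem h₁ h₂) (H.inv_mem h₁)) (H.inv_mem h₂)

theorem inf_commutator_le_inf {X : Type} [Group X] (H K : Subgroup X) :
    ⁅H, H⁆ ⊓ ⁅K, K⁆ ≤ H ⊓ K :=
  inf_le_inf (commutator_le_self H) (commutator_le_self K)

theorem subgroupOf_le {X : Type} [Group X] {B C : Subgroup X} (h : B ≤ C)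
    (J : Subgroup X) : B.subgroupOf J ≤ C.subgroupOf J := fun _x hx => h hx

/-- The natural projection `X/N → X/M` for `N ≤ M`. -/
def quotProj {X : Type} [Group X] {N M : Subgroup X} [N.Normal] [M.Normal] (h : N ≤ M) :
    (X ⧸ N) →* (X ⧸ M) :=
  QuotientGroup.map N M (MonoidHom.id X) (by rwa [Subgroup.comap_id])

/-- The inflation homomorphism `H²(X/M, D) → H²(X/N, D)` for `N ≤ M`. -/
def inflMap {X : Type} [Group X] {N M : Subgroup X} [N.Normal] [M.Normal]
    (h : N ≤ M) (D : Type) [AddCommGroup D] : H2 (X ⧸ M) D →+ H2 (X ⧸ N) D :=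
  H2Map (quotProj h)

/-- The natural homomorphism `H/(A ∩ H) → X/A` for subgroups `A, H` of `X`;
for `A ≤ H` this realizes `H/A` as a subgroup of `X/A`. -/
def quotInclusion {X : Type} [Group X] (H A : Subgroup X) [A.Normal]
    [(A.subgroupOf H).Normal] : (↥H ⧸ A.subgroupOf H) →* X ⧸ A :=
  QuotientGroup.map (A.subgroupOf H) A H.subtype (fun _x hx => hx)

/-- The abelian tensor product `X ⊗ Y = X/[X,X] ⊗_ℤ Y/[Y,Y]` of two groups. -/
abbrev AbTensor (X Y : Type) [Group X] [Group Y] : Type :=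
  TensorProduct ℤ (Additive (Abelianization X)) (Additive (Abelianization Y))

/-- The element `x[X,X] ⊗ y[Y,Y]` of the abelian tensor product. -/
noncomputable abbrev tmulAb {X Y : Type} [Group X] [Group Y] (x : X) (y : Y) :
    AbTensor X Y :=
  Additive.ofMul (Abelianization.of x) ⊗ₜ[ℤ] Additive.ofMul (Abelianization.of y)

/-- The map on abelian tensor products induced by a pair of group homomorphisms. -/
noncomputable def abTensorMap {X Y X' Y' : Type} [Group X] [Group Y] [Group X'] [Group Y']
    (f : X →* X') (g : Y →* Y') : AbTensor X Y →ₗ[ℤ] AbTensor X' Y' :=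
  TensorProduct.map (MonoidHom.toAdditive (Abelianization.map f)).toIntLinearMap
    (MonoidHom.toAdditive (Abelianization.map g)).toIntLinearMap

/-!
Fix a decomposition `g = σ₁(g) σ₂(g)` with `σ₁(g) ∈ H`, `σ₂(g) ∈ K`. The factor set `α` of `σ₁`
takes values in the central subgroup `A`, and `σ₁`, `σ₂` induce homomorphisms `p : G → H/A`,
`q : G → K/A`. A pair `(c, β) ∈ Hom(A, D) × Hom(H/A ⊗ K/A, D)` gives the cocycle
`c ∘ α + β ∘ (p ⊗ q)`, which vanishes on `H` and is a coboundary on `K`. Conversely, a cocycle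
that is a coboundary on `H` and on `K` is cohomologous to one of this form: `c` is the difference
of its two trivializations on `A`, and `β` is the pairing `f(x, y) - f(y, x)` of `x ∈ H`, `y ∈ K`.
The class of `c ∘ α + β ∘ (p ⊗ q)` vanishes exactly when `β = 0` and `c` vanishes on `Z`: two
trivializations on `H` (or `K`) differ by a homomorphism, which kills commutators, and conversely
such a `c` is a sum of homomorphisms defined on `H` and on `K`. As `D` is divisible,
`Hom(A, D) → Hom(Z, D)` is onto, so the construction descends to an injection on
`Hom(Z, D) × Hom(H/A ⊗ K/A, D)`.
-/

section Cohomology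

variable {X : Type} [Group X]

theorem mem_commutator_iff_coe_mem {J : Subgroup X} {x : J} :
    x ∈ commutator J ↔ (x : X) ∈ ⁅J, J⁆ := by
  rw [← Subgroup.map_subtype_commutator]
  exact (Subgroup.mem_map_iff_mem J.subtype_injective).symm

theorem H2mk_eq_zero_iff (f : cocycles2 X D) :
    H2mk f = 0 ↔ (f : X → X → D) ∈ coboundaries2 X D :=
  (QuotientAddGroup.eq_zero_iff f).trans AddSubgroup.mem_addSubgroupOf

theorem H2mk_eq_H2mk_iff (f₁ f₂ : cocycles2 X D) :
    H2mk f₁ = H2mk f₂ ↔ ((f₂ - f₁ : cocycles2 X D) : X → X → D) ∈ coboundaries2 X D := by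
  rw [← neg_add_eq_sub]
  exact QuotientAddGroup.eq.trans AddSubgroup.mem_addSubgroupOf

theorem H2Map_subtype_H2mk_eq_zero_iff (J : Subgroup X) (f : cocycles2 X D) :
    H2Map J.subtype (H2mk f) = 0 ↔
      ∃ φ : J → D, ∀ x y : J, (f : X → X → D) x y = φ x + φ y - φ (x * y) :=
  H2mk_eq_zero_iff (pullCocycle J.subtype f)

def homOfCoboundaryEq {ψ₁ ψ₂ : X → D}
    (h : ∀ x y, ψ₁ x + ψ₁ y - ψ₁ (x * y) = ψ₂ x + ψ₂ y - ψ₂ (x * y)) : Additive X →+ D :=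
  AddMonoidHom.mk' (fun x => ψ₁ x.toMul - ψ₂ x.toMul) fun x y => by
    simp only [toMul_add]
    linear_combination (norm := abel) -h x.toMul y.toMul

theorem eq_on_commutator_of_coboundary_eq {ψ₁ ψ₂ : X → D}
    (h : ∀ x y, ψ₁ x + ψ₁ y - ψ₁ (x * y) = ψ₂ x + ψ₂ y - ψ₂ (x * y))
    {z : X} (hz : z ∈ commutator X) : ψ₁ z = ψ₂ z := by
  have hker := Abelianization.commutator_subset_ker
    (MonoidHom.toAdditiveLeft.symm (homOfCoboundaryEq h)) hz
  exact sub_eq_zero.mp (congrArg Multiplicative.toAdd hker)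

theorem cocycle_sub_swap_mul_left {f : X → X → D} (hf : f ∈ cocycles2 X D) {x₁ x₂ y : X}
    (h₁ : Commute x₁ y) (h₂ : Commute x₂ y) :
    f (x₁ * x₂) y - f y (x₁ * x₂) = (f x₁ y - f y x₁) + (f x₂ y - f y x₂) := by
  have e₁ := hf y x₁ x₂
  have e₂ := hf x₁ y x₂
  have e₃ := hf x₁ x₂ y
  rw [← h₁.eq] at e₁
  rw [h₂.eq] at e₃
  linear_combination (norm := abel) e₁ - e₂ + e₃

theorem cocycle_sub_swap_mul_right {f : X → X → D} (hf : f ∈ cocycles2 X D) {x y₁ y₂ : X}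
    (h₁ : Commute x y₁) (h₂ : Commute x y₂) :
    f x (y₁ * y₂) - f (y₁ * y₂) x = (f x y₁ - f y₁ x) + (f x y₂ - f y₂ x) := by
  linear_combination (norm := abel) -cocycle_sub_swap_mul_left hf h₁.symm h₂.symm

theorem apply_eq_apply_swap_of_coboundary {J : Subgroup X} {f : X → X → D} {φ : J → D}
    (hφ : ∀ x y : J, f x y = φ x + φ y - φ (x * y)) {x y : X} (hx : x ∈ J) (hy : y ∈ J)
    (hxy : Commute x y) : f x y = f y x := by
  have hJ : (⟨x, hx⟩ : J) * ⟨y, hy⟩ = ⟨y, hy⟩ * ⟨x, hx⟩ := Subtype.ext hxy.eq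
  rw [show f x y = f (⟨x, hx⟩ : J) (⟨y, hy⟩ : J) from rfl, hφ, hJ, add_comm (φ _)]
  exact (hφ _ _).symm

end Cohomology

section AbelianTensor

variable {X Y : Type} [Group X] [Group Y]

theorem tmulAb_mul_left (x₁ x₂ : X) (y : Y) :
    tmulAb (x₁ * x₂) y = tmulAb x₁ y + tmulAb x₂ y := by
  rw [tmulAb, map_mul, ofMul_mul, TensorProduct.add_tmul]

theorem tmulAb_mul_right (x : X) (y₁ y₂ : Y) :
    tmulAb x (y₁ * y₂) = tmulAb x y₁ + tmulAb x y₂ := by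
  rw [tmulAb, map_mul, ofMul_mul, TensorProduct.tmul_add]

@[simp]
theorem tmulAb_one_left (y : Y) : tmulAb (1 : X) y = 0 := by
  rw [tmulAb, map_one, ofMul_one, TensorProduct.zero_tmul]

@[simp]
theorem tmulAb_one_right (x : X) : tmulAb x (1 : Y) = 0 := by
  rw [tmulAb, map_one, ofMul_one, TensorProduct.tmul_zero]

variable (N : Subgroup X) [N.Normal] (M : Subgroup Y) [M.Normal]

theorem ofMul_of_mk_surjective :
    Function.Surjective fun x : X => Additive.ofMul (Abelianization.of (x : X ⧸ N)) := by
  intro t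
  obtain ⟨q, hq⟩ := QuotientGroup.mk_surjective (s := commutator (X ⧸ N)) t.toMul
  obtain ⟨x, rfl⟩ := QuotientGroup.mk_surjective q
  exact ⟨x, hq⟩

variable {N M}

theorem abTensor_quotient_hom_ext {β₁ β₂ : AbTensor (X ⧸ N) (Y ⧸ M) →+ D}
    (h : ∀ (x : X) (y : Y),
      β₁ (tmulAb (x : X ⧸ N) (y : Y ⧸ M)) = β₂ (tmulAb (x : X ⧸ N) (y : Y ⧸ M))) :
    β₁ = β₂ := by
  have hlin : β₁.toIntLinearMap = β₂.toIntLinearMap := TensorProduct.ext' fun m n => by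
    obtain ⟨x, rfl⟩ := ofMul_of_mk_surjective N m
    obtain ⟨y, rfl⟩ := ofMul_of_mk_surjective M n
    exact h x y
  ext t
  exact LinearMap.congr_fun hlin t

def quotAbLift {E : Type} [AddCommGroup E] (f : X →* Multiplicative E) (hf : N ≤ f.ker) :
    Additive (Abelianization (X ⧸ N)) →+ E :=
  MonoidHom.toAdditiveLeft (Abelianization.lift (QuotientGroup.lift N f hf))

theorem quotAb_hom_ext {E : Type} [AddCommGroup E]
    {φ ψ : Additive (Abelianization (X ⧸ N)) →+ E}
    (h : ∀ x : X, φ (Additive.ofMul (Abelianization.of (x : X ⧸ N))) =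
      ψ (Additive.ofMul (Abelianization.of (x : X ⧸ N)))) : φ = ψ := by
  refine AddMonoidHom.ext fun t => ?_
  obtain ⟨x, rfl⟩ := ofMul_of_mk_surjective N t
  exact h x

theorem exists_abTensor_hom_tmulAb (B : X → Y → D)
    (hl : ∀ x₁ x₂ y, B (x₁ * x₂) y = B x₁ y + B x₂ y)
    (hr : ∀ x y₁ y₂, B x (y₁ * y₂) = B x y₁ + B x y₂)
    (hN : ∀ x ∈ N, ∀ y, B x y = 0) (hM : ∀ x, ∀ y ∈ M, B x y = 0) :
    ∃ β : AbTensor (X ⧸ N) (Y ⧸ M) →+ D,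
      ∀ (x : X) (y : Y), β (tmulAb (x : X ⧸ N) (y : Y ⧸ M)) = B x y := by
  let B' (x : X) : Y →* Multiplicative D :=
    MonoidHom.mk' (fun y => Multiplicative.ofAdd (B x y)) fun y₁ y₂ => by rw [hr]; rfl
  let inner (x : X) : Additive (Abelianization (Y ⧸ M)) →+ D :=
    quotAbLift (B' x) fun y hy => congrArg Multiplicative.ofAdd (hM x y hy)
  have inner_mul (x₁ x₂ : X) : inner (x₁ * x₂) = inner x₁ + inner x₂ :=
    quotAb_hom_ext fun y => hl x₁ x₂ y
  let outer : X →* Multiplicative (Additive (Abelianization (Y ⧸ M)) →+ D) :=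
    MonoidHom.mk' (fun x => Multiplicative.ofAdd (inner x)) fun x₁ x₂ => by rw [inner_mul]; rfl
  have outer_ker : N ≤ outer.ker := fun x hx =>
    congrArg Multiplicative.ofAdd (quotAb_hom_ext (ψ := 0) fun y => hN x hx y)
  refine ⟨TensorProduct.liftAddHom (quotAbLift outer outer_ker) fun r m n => ?_, fun x y => rfl⟩
  rw [map_zsmul, map_zsmul, AddMonoidHom.smul_apply]

end AbelianTensor

theorem exists_comp_eq_of_ker_le [DivisibleBy D ℤ] {M N : Type} [AddGroup M] [AddCommGroup N]
    (θ : M →+ N) (c : M →+ D) (h : θ.ker ≤ c.ker) : ∃ Φ : N →+ D, Φ.comp θ = c := by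
  let c' := θ.rangeRestrict.liftOfSurjective θ.rangeRestrict_surjective
    ⟨c, θ.ker_rangeRestrict ▸ h⟩
  obtain ⟨Φ, hΦ⟩ := (Module.Baer.of_divisible D).extension_property_addMonoidHom
    θ.range.subtype Subtype.val_injective c'
  refine ⟨Φ, AddMonoidHom.ext fun m => ?_⟩
  exact (DFunLike.congr_fun hΦ (θ.rangeRestrict m)).trans
    (θ.rangeRestrict.liftOfRightInverse_comp_apply _ _ _ m)

theorem exists_injective_range_eq {M P Q : Type} [AddGroup M] [AddGroup P] [AddGroup Q]
    (ρ : M →+ P) (hρ : Function.Surjective ρ) (ι₀ : M →+ Q) (h : ι₀.ker = ρ.ker) :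
    ∃ ι : P →+ Q, Function.Injective ι ∧ Set.range ι = Set.range ι₀ := by
  let ι := ρ.liftOfSurjective hρ ⟨ι₀, h.ge⟩
  have hι (m : M) : ι (ρ m) = ι₀ m := ρ.liftOfRightInverse_comp_apply _ _ _ m
  refine ⟨ι, (injective_iff_map_eq_zero ι).mpr fun p hp => ?_, ?_⟩
  · obtain ⟨m, rfl⟩ := hρ p
    rw [hι] at hp
    exact h.le hp
  · rw [← hρ.range_comp]
    exact congrArg Set.range (funext hι)

section FactorSet

variable {X : Type} [Group X]

def factorSet (s : G → X) (g₁ g₂ : G) : X := (s (g₁ * g₂))⁻¹ * s g₁ * s g₂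

theorem factorSet_mul_factorSet {s : G → X}
    (hs : ∀ g₁ g₂ g, Commute (factorSet s g₁ g₂) (s g)) (g₁ g₂ g₃ : G) :
    factorSet s g₁ g₂ * factorSet s (g₁ * g₂) g₃ =
      factorSet s g₂ g₃ * factorSet s g₁ (g₂ * g₃) := by
  have lhs : factorSet s g₁ g₂ * factorSet s (g₁ * g₂) g₃ =
      (s (g₁ * g₂ * g₃))⁻¹ * s g₁ * s g₂ * s g₃ := by
    calc _ = (s (g₁ * g₂ * g₃))⁻¹ * s (g₁ * g₂) * factorSet s g₁ g₂ * s g₃ := by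
          rw [← ((hs _ _ _).inv_right.mul_right (hs _ _ _)).eq, factorSet, factorSet]
          group
      _ = _ := by rw [factorSet]; group
  have rhs : factorSet s g₂ g₃ * factorSet s g₁ (g₂ * g₃) =
      (s (g₁ * (g₂ * g₃)))⁻¹ * s g₁ * s g₂ * s g₃ := by
    calc _ = (s (g₁ * (g₂ * g₃)))⁻¹ * s g₁ * s (g₂ * g₃) * factorSet s g₂ g₃ := by
          rw [← (((hs _ _ _).inv_right.mul_right (hs _ _ _)).mul_right (hs _ _ _)).eq,
            factorSet, factorSet]
      _ = _ := by rw [factorSet]; group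
  rw [lhs, rhs, mul_assoc g₁]

end FactorSet

def cocycleOfFactorSet {A : Type} [Group A] (α : G → G → A)
    (hα : ∀ g₁ g₂ g₃, α g₁ g₂ * α (g₁ * g₂) g₃ = α g₂ g₃ * α g₁ (g₂ * g₃)) :
    (Additive A →+ D) →+ cocycles2 G D where
  toFun c := ⟨fun g₁ g₂ => c (Additive.ofMul (α g₁ g₂)), fun g₁ g₂ g₃ => by
    simp only [← map_add, ← ofMul_mul, hα]⟩
  map_zero' := rfl
  map_add' _ _ := rfl

noncomputable def cupCocycle {P Q : Type} [Group P] [Group Q] (p : G →* P) (q : G →* Q) :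
    (AbTensor P Q →+ D) →+ cocycles2 G D where
  toFun β := ⟨fun g₁ g₂ => β (tmulAb (p g₁) (q g₂)), fun g₁ g₂ g₃ => by
    simp only [map_mul, tmulAb_mul_left, tmulAb_mul_right, map_add]
    abel⟩
  map_zero' := rfl
  map_add' _ _ := rfl

section CentralProduct

variable {H K : Subgroup G}

structure IsMulSection (H K : Subgroup G) (σ : G → H × K) : Prop where
  fst_mul_snd : ∀ g, ((σ g).1 : G) * (σ g).2 = g
  apply_of_mem_left : ∀ g (hg : g ∈ H), σ g = (⟨g, hg⟩, 1)
  fst_mem_right : ∀ g ∈ K, ((σ g).1 : G) ∈ K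

theorem exists_isMulSection [K.Normal] (hprod : H ⊔ K = ⊤) : ∃ σ, IsMulSection H K σ := by
  classical
  have hdecomp : ∀ g : G, ∃ p : H × K, (p.1 : G) * p.2 = g ∧
      (∀ hg : g ∈ H, p = (⟨g, hg⟩, 1)) ∧ (g ∈ K → (p.1 : G) ∈ K) := by
    intro g
    by_cases hgH : g ∈ H
    · exact ⟨(⟨g, hgH⟩, 1), mul_one g, fun _ => rfl, id⟩
    by_cases hgK : g ∈ K
    · exact ⟨(1, ⟨g, hgK⟩), one_mul g, fun h => absurd h hgH, fun _ => K.one_mem⟩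
    obtain ⟨h, hh, k, hk, rfl⟩ := Subgroup.mem_sup_of_normal_right.mp (hprod ▸ Subgroup.mem_top g)
    exact ⟨(⟨h, hh⟩, ⟨k, hk⟩), rfl, fun h' => absurd h' hgH, fun h' => absurd h' hgK⟩
  choose σ h₁ h₂ h₃ using hdecomp
  exact ⟨σ, ⟨h₁, h₂, h₃⟩⟩

variable {σ : G → H × K}

theorem IsMulSection.snd_mul (hσ : IsMulSection H K σ) (hcomm : ∀ h ∈ H, ∀ k ∈ K, Commute h k)
    (g₁ g₂ : G) :
    ((σ (g₁ * g₂)).2 : G) =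
      factorSet (fun g => ((σ g).1 : G)) g₁ g₂ * ((σ g₁).2 * (σ g₂).2) := by
  have hc : ((σ g₁).2 : G) * (σ g₂).1 = (σ g₂).1 * (σ g₁).2 :=
    (hcomm _ (σ g₂).1.2 _ (σ g₁).2.2).eq.symm
  apply mul_left_cancel (a := ((σ (g₁ * g₂)).1 : G))
  calc ((σ (g₁ * g₂)).1 : G) * (σ (g₁ * g₂)).2 = g₁ * g₂ := hσ.fst_mul_snd _
    _ = (σ g₁).1 * (σ g₁).2 * ((σ g₂).1 * (σ g₂).2) := by rw [hσ.fst_mul_snd, hσ.fst_mul_snd]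
    _ = (σ g₁).1 * (σ g₂).1 * ((σ g₁).2 * (σ g₂).2) := by
      rw [mul_assoc, ← mul_assoc ((σ g₁).2 : G), hc]; group
    _ = _ := by rw [factorSet]; group

theorem IsMulSection.factorSet_mem_inf (hσ : IsMulSection H K σ)
    (hcomm : ∀ h ∈ H, ∀ k ∈ K, Commute h k) (g₁ g₂ : G) :
    factorSet (fun g => ((σ g).1 : G)) g₁ g₂ ∈ H ⊓ K := by
  refine ⟨H.mul_mem (H.mul_mem (H.inv_mem (σ _).1.2) (σ g₁).1.2) (σ g₂).1.2, ?_⟩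
  rw [eq_mul_inv_of_mul_eq (hσ.snd_mul hcomm g₁ g₂).symm]
  exact K.mul_mem (σ _).2.2 (K.inv_mem (K.mul_mem (σ g₁).2.2 (σ g₂).2.2))

variable (hcomm : ∀ h ∈ H, ∀ k ∈ K, Commute h k) (hσ : IsMulSection H K σ)

def sectionFactor (g₁ g₂ : G) : ↥(H ⊓ K) :=
  ⟨factorSet (fun g => ((σ g).1 : G)) g₁ g₂, hσ.factorSet_mem_inf hcomm g₁ g₂⟩

theorem sectionFactor_mul_sectionFactor (g₁ g₂ g₃ : G) :
    sectionFactor hcomm hσ g₁ g₂ * sectionFactor hcomm hσ (g₁ * g₂) g₃ =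
      sectionFactor hcomm hσ g₂ g₃ * sectionFactor hcomm hσ g₁ (g₂ * g₃) :=
  Subtype.ext <| factorSet_mul_factorSet
    (fun _ _ g => (hcomm _ (σ g).1.2 _ (hσ.factorSet_mem_inf hcomm _ _).2).symm) g₁ g₂ g₃

def quotLeft [((H ⊓ K).subgroupOf H).Normal] : G →* H ⧸ (H ⊓ K).subgroupOf H :=
  MonoidHom.mk' (fun g => ((σ g).1 : H ⧸ (H ⊓ K).subgroupOf H)) fun g₁ g₂ => by
    rw [← QuotientGroup.mk_mul, QuotientGroup.eq, Subgroup.mem_subgroupOf]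
    simp only [Subgroup.coe_mul, Subgroup.coe_inv, ← mul_assoc]
    exact hσ.factorSet_mem_inf hcomm g₁ g₂

def quotRight [((H ⊓ K).subgroupOf K).Normal] : G →* K ⧸ (H ⊓ K).subgroupOf K :=
  MonoidHom.mk' (fun g => ((σ g).2 : K ⧸ (H ⊓ K).subgroupOf K)) fun g₁ g₂ => by
    rw [← QuotientGroup.mk_mul, QuotientGroup.eq_iff_div_mem, Subgroup.mem_subgroupOf,
      Subgroup.coe_div, Subgroup.coe_mul, hσ.snd_mul hcomm, mul_div_cancel_right]
    exact hσ.factorSet_mem_inf hcomm g₁ g₂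

theorem quotLeft_of_mem_left [((H ⊓ K).subgroupOf H).Normal] {x : G} (hx : x ∈ H) :
    quotLeft hcomm hσ x = ((⟨x, hx⟩ : H) : H ⧸ (H ⊓ K).subgroupOf H) := by
  simp only [quotLeft, MonoidHom.mk'_apply, hσ.apply_of_mem_left x hx]

theorem quotRight_of_mem_left [((H ⊓ K).subgroupOf K).Normal] {x : G} (hx : x ∈ H) :
    quotRight hcomm hσ x = 1 := by
  simp only [quotRight, MonoidHom.mk'_apply, hσ.apply_of_mem_left x hx, QuotientGroup.mk_one]

theorem quotLeft_of_mem_right [((H ⊓ K).subgroupOf H).Normal] {y : G} (hy : y ∈ K) :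
    quotLeft hcomm hσ y = 1 :=
  (QuotientGroup.eq_one_iff _).mpr ⟨(σ y).1.2, hσ.fst_mem_right y hy⟩

theorem quotRight_of_mem_right [((H ⊓ K).subgroupOf K).Normal] {y : G} (hy : y ∈ K) :
    quotRight hcomm hσ y = ((⟨y, hy⟩ : K) : K ⧸ (H ⊓ K).subgroupOf K) := by
  have hdiv : ((σ y).2 : G) / y = ((σ y).1 : G)⁻¹ := by
    nth_rw 2 [← hσ.fst_mul_snd y]
    rw [div_eq_mul_inv, mul_inv_rev, mul_inv_cancel_left]
  refine QuotientGroup.eq_iff_div_mem.mpr ?_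
  rw [Subgroup.mem_subgroupOf, Subgroup.coe_div, Subgroup.coe_mk, hdiv]
  exact inv_mem ⟨(σ y).1.2, hσ.fst_mem_right y hy⟩

end CentralProduct

section SectionCocycle

variable {H K : Subgroup G} {σ : G → H × K}

def IsMulSection.fstInf (hσ : IsMulSection H K σ) (k : K) : ↥(H ⊓ K) :=
  ⟨(σ k).1, (σ k).1.2, hσ.fst_mem_right k k.2⟩

theorem IsMulSection.fstInf_inclusion (hσ : IsMulSection H K σ) (a : ↥(H ⊓ K)) :
    hσ.fstInf (Subgroup.inclusion inf_le_right a) = a :=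
  Subtype.ext (by simp [IsMulSection.fstInf, hσ.apply_of_mem_left a a.2.1])

variable (hcomm : ∀ h ∈ H, ∀ k ∈ K, Commute h k) (hσ : IsMulSection H K σ)
  [((H ⊓ K).subgroupOf H).Normal] [((H ⊓ K).subgroupOf K).Normal]

noncomputable def sectionCocycle :
    (Additive ↥(H ⊓ K) →+ D) ×
      (AbTensor (↥H ⧸ (H ⊓ K).subgroupOf H) (↥K ⧸ (H ⊓ K).subgroupOf K) →+ D) →+
      cocycles2 G D :=
  (cocycleOfFactorSet (sectionFactor hcomm hσ) (sectionFactor_mul_sectionFactor hcomm hσ)).coprod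
    (cupCocycle (quotLeft hcomm hσ) (quotRight hcomm hσ))

variable (p : (Additive ↥(H ⊓ K) →+ D) ×
  (AbTensor (↥H ⧸ (H ⊓ K).subgroupOf H) (↥K ⧸ (H ⊓ K).subgroupOf K) →+ D))

theorem sectionCocycle_apply (g₁ g₂ : G) :
    (sectionCocycle hcomm hσ p : G → G → D) g₁ g₂ =
      p.1 (Additive.ofMul (sectionFactor hcomm hσ g₁ g₂)) +
        p.2 (tmulAb (quotLeft hcomm hσ g₁) (quotRight hcomm hσ g₂)) :=
  rfl

theorem sectionCocycle_apply_of_mem_left {x y : G} (hx : x ∈ H) (hy : y ∈ H) :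
    (sectionCocycle hcomm hσ p : G → G → D) x y = 0 := by
  have hα : sectionFactor hcomm hσ x y = 1 := Subtype.ext <| by
    simp [sectionFactor, factorSet, hσ.apply_of_mem_left _ hx, hσ.apply_of_mem_left _ hy,
      hσ.apply_of_mem_left _ (H.mul_mem hx hy), mul_assoc]
  rw [sectionCocycle_apply, hα, quotRight_of_mem_left hcomm hσ hy]
  simp

theorem sectionCocycle_apply_of_mem_right (x y : K) :
    (sectionCocycle hcomm hσ p : G → G → D) x y =
      p.1 (Additive.ofMul (hσ.fstInf x)) + p.1 (Additive.ofMul (hσ.fstInf y)) -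
        p.1 (Additive.ofMul (hσ.fstInf (x * y))) := by
  have hα : sectionFactor hcomm hσ x y = (hσ.fstInf (x * y))⁻¹ * hσ.fstInf x * hσ.fstInf y :=
    rfl
  rw [sectionCocycle_apply, hα, quotLeft_of_mem_right hcomm hσ x.2, tmulAb_one_left, map_zero,
    add_zero, ofMul_mul, ofMul_mul, ofMul_inv, map_add, map_add, map_neg]
  abel

theorem sectionCocycle_apply_sub_apply_swap {x y : G} (hx : x ∈ H) (hy : y ∈ K) :
    (sectionCocycle hcomm hσ p : G → G → D) x y - (sectionCocycle hcomm hσ p : G → G → D) y x =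
      p.2 (tmulAb ((⟨x, hx⟩ : H) : H ⧸ (H ⊓ K).subgroupOf H)
        ((⟨y, hy⟩ : K) : K ⧸ (H ⊓ K).subgroupOf K)) := by
  have hα : sectionFactor hcomm hσ x y = sectionFactor hcomm hσ y x := Subtype.ext <| by
    simp only [sectionFactor, factorSet, (hcomm x hx y hy).eq, hσ.apply_of_mem_left x hx,
      mul_assoc, (hcomm x hx _ (hσ.fst_mem_right y hy)).eq]
  rw [sectionCocycle_apply, sectionCocycle_apply, hα, quotLeft_of_mem_left hcomm hσ hx,
    quotRight_of_mem_right hcomm hσ hy, quotLeft_of_mem_right hcomm hσ hy,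
    quotRight_of_mem_left hcomm hσ hx]
  simp

theorem H2Map_subtype_left_sectionCocycle :
    H2Map H.subtype (H2mk (sectionCocycle hcomm hσ p)) = 0 :=
  (H2Map_subtype_H2mk_eq_zero_iff _ _).mpr ⟨0, fun x y => by
    simpa using sectionCocycle_apply_of_mem_left hcomm hσ p x.2 y.2⟩

theorem H2Map_subtype_right_sectionCocycle :
    H2Map K.subtype (H2mk (sectionCocycle hcomm hσ p)) = 0 :=
  (H2Map_subtype_H2mk_eq_zero_iff _ _).mpr ⟨_, sectionCocycle_apply_of_mem_right hcomm hσ p⟩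

end SectionCocycle

theorem cocycle_apply_mul_mul {f : G → G → D} (hf : f ∈ cocycles2 G D)
    {h₁ k₁ h₂ k₂ h₃ k₃ a : G} (hh : h₁ * h₂ = h₃ * a) (hk : k₃ = a * (k₁ * k₂))
    (hc : k₁ * h₂ = h₂ * k₁) (hs : f k₁ h₂ = f h₂ k₁) :
    f (h₁ * k₁) (h₂ * k₂) =
      f h₁ h₂ - f h₃ a + f k₁ k₂ + f a (k₁ * k₂) + f h₃ k₃ - f h₁ k₁ - f h₂ k₂ := by
  have e₁ := hf h₁ k₁ (h₂ * k₂)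
  have e₂ := hf k₁ h₂ k₂
  have e₃ := hf h₂ k₁ k₂
  have e₄ := hf h₁ h₂ (k₁ * k₂)
  have e₅ := hf h₃ a (k₁ * k₂)
  rw [hc] at e₂
  rw [← mul_assoc k₁, hc, mul_assoc] at e₁
  rw [← hh, ← hk] at e₅
  linear_combination (norm := abel) e₁ - e₂ + hs + e₃ - e₄ + e₅

theorem mem_coboundaries2_of_restrict {H K : Subgroup G} [K.Normal] (hprod : H ⊔ K = ⊤)
    (hcomm : ∀ h ∈ H, ∀ k ∈ K, Commute h k) {f : G → G → D} (hf : f ∈ cocycles2 G D)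
    {ψH : H → D} {ψK : K → D}
    (hH : ∀ x y : H, f x y = ψH x + ψH y - ψH (x * y))
    (hK : ∀ x y : K, f x y = ψK x + ψK y - ψK (x * y))
    (hA : ∀ a : ↥(H ⊓ K),
      ψH (Subgroup.inclusion inf_le_left a) = ψK (Subgroup.inclusion inf_le_right a))
    (hsymm : ∀ x ∈ H, ∀ y ∈ K, f x y = f y x) :
    f ∈ coboundaries2 G D := by
  obtain ⟨σ, hσ⟩ := exists_isMulSection hprod
  refine ⟨fun g => ψH (σ g).1 + ψK (σ g).2 - f (σ g).1 (σ g).2, fun g₁ g₂ => ?_⟩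
  let a : ↥(H ⊓ K) := sectionFactor hcomm hσ g₁ g₂
  have hh : ((σ g₁).1 : G) * (σ g₂).1 = (σ (g₁ * g₂)).1 * (a : G) := by
    simp only [a, sectionFactor, factorSet]
    group
  have hk : ((σ (g₁ * g₂)).2 : G) = a * ((σ g₁).2 * (σ g₂).2) := hσ.snd_mul hcomm g₁ g₂
  have key := cocycle_apply_mul_mul hf hh hk (hcomm _ (σ g₂).1.2 _ (σ g₁).2.2).eq.symm
    (hsymm _ (σ g₂).1.2 _ (σ g₁).2.2).symm
  rw [hσ.fst_mul_snd, hσ.fst_mul_snd] at key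
  have e₂ := hH (σ (g₁ * g₂)).1 (Subgroup.inclusion inf_le_left a)
  have e₄ := hK (Subgroup.inclusion inf_le_right a) ((σ g₁).2 * (σ g₂).2)
  simp only [Subgroup.coe_mul, Subgroup.coe_inclusion] at e₂ e₄
  have hψH : ψH ((σ g₁).1 * (σ g₂).1) =
      ψH ((σ (g₁ * g₂)).1 * Subgroup.inclusion inf_le_left a) :=
    congrArg ψH (Subtype.ext hh)
  have hψK : ψK (σ (g₁ * g₂)).2 =
      ψK (Subgroup.inclusion inf_le_right a * ((σ g₁).2 * (σ g₂).2)) :=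
    congrArg ψK (Subtype.ext hk)
  beta_reduce
  rw [key, hH, e₂, hK, e₄, hψH, hψK, hA]
  abel

section RestrictToZ

variable {H K : Subgroup G}

variable (H K) in
def restrictToZ :
    (Additive ↥(H ⊓ K) →+ D) →+ (Additive ↥(⁅H, H⁆ ⊓ ⁅K, K⁆) →+ D) :=
  AddMonoidHom.compHom' (MonoidHom.toAdditive (Subgroup.inclusion (inf_commutator_le_inf H K)))

variable [DivisibleBy D ℤ]

theorem restrictToZ_surjective (hcomm : ∀ h ∈ H, ∀ k ∈ K, Commute h k) :
    Function.Surjective (restrictToZ (D := D) H K) := by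
  let _ : CommGroup ↥(H ⊓ K) :=
    { (H ⊓ K).toGroup with mul_comm := fun a b => Subtype.ext (hcomm a a.2.1 b b.2.2).eq }
  let ι := MonoidHom.toAdditive (Subgroup.inclusion (inf_commutator_le_inf H K))
  have hι : ι.ker = ⊥ := (AddMonoidHom.ker_eq_bot_iff ι).mpr
    (Subgroup.inclusion_injective (inf_commutator_le_inf H K))
  exact fun γ => exists_comp_eq_of_ker_le ι γ (hι ▸ bot_le)

/-- `A / Z` embeds into `Hᵃᵇ × Kᵃᵇ`, and `D` is injective. -/
theorem exists_add_of_restrictToZ_eq_zero (c : Additive ↥(H ⊓ K) →+ D)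
    (hc : restrictToZ H K c = 0) :
    ∃ (u : Additive H →+ D) (v : Additive K →+ D), ∀ a : ↥(H ⊓ K),
      c (Additive.ofMul a) = u (Additive.ofMul (Subgroup.inclusion inf_le_left a)) +
        v (Additive.ofMul (Subgroup.inclusion inf_le_right a)) := by
  let abH : Additive H →+ Additive (Abelianization H) := MonoidHom.toAdditive Abelianization.of
  let abK : Additive K →+ Additive (Abelianization K) := MonoidHom.toAdditive Abelianization.of
  let θ := (abH.comp (MonoidHom.toAdditive (Subgroup.inclusion inf_le_left))).prod
    (abK.comp (MonoidHom.toAdditive (Subgroup.inclusion (inf_le_right (a := H) (b := K)))))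
  have hker : θ.ker ≤ c.ker := by
    intro a ha
    obtain ⟨h₁, h₂⟩ := Prod.ext_iff.mp ha
    have hZ : (a.toMul : G) ∈ ⁅H, H⁆ ⊓ ⁅K, K⁆ :=
      ⟨mem_commutator_iff_coe_mem.mp (Abelianization.ker_of H ▸ MonoidHom.mem_ker.mpr h₁),
        mem_commutator_iff_coe_mem.mp (Abelianization.ker_of K ▸ MonoidHom.mem_ker.mpr h₂)⟩
    exact DFunLike.congr_fun hc (Additive.ofMul ⟨_, hZ⟩)
  obtain ⟨Φ, hΦ⟩ := exists_comp_eq_of_ker_le θ c hker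
  refine ⟨(Φ.comp (AddMonoidHom.inl _ _)).comp abH, (Φ.comp (AddMonoidHom.inr _ _)).comp abK,
    fun a => ?_⟩
  rw [← hΦ]
  simp only [AddMonoidHom.comp_apply, AddMonoidHom.inl_apply, AddMonoidHom.inr_apply, ← map_add,
    Prod.mk_add_mk, add_zero, zero_add]
  rfl

end RestrictToZ

section Classification

variable {H K : Subgroup G} {σ : G → H × K} (hcomm : ∀ h ∈ H, ∀ k ∈ K, Commute h k)
  (hσ : IsMulSection H K σ) [((H ⊓ K).subgroupOf H).Normal] [((H ⊓ K).subgroupOf K).Normal]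
  (p : (Additive ↥(H ⊓ K) →+ D) ×
    (AbTensor (↥H ⧸ (H ⊓ K).subgroupOf H) (↥K ⧸ (H ⊓ K).subgroupOf K) →+ D))

theorem restrictToZ_eq_zero_of_H2mk_sectionCocycle_eq_zero
    (h : H2mk (sectionCocycle hcomm hσ p) = 0) : restrictToZ H K p.1 = 0 ∧ p.2 = 0 := by
  obtain ⟨φ, hφ⟩ := (H2mk_eq_zero_iff _).mp h
  constructor
  · refine AddMonoidHom.ext fun z => ?_
    have hz : (z.toMul : G) ∈ H ⊓ K := inf_commutator_le_inf H K z.toMul.2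
    have hφH : φ (z.toMul : G) = 0 :=
      eq_on_commutator_of_coboundary_eq (ψ₁ := fun x : H => φ x) (ψ₂ := 0) (fun x y => by simpa [← hφ] using sectionCocycle_apply_of_mem_left hcomm hσ p x.2 y.2)
      ((mem_commutator_iff_coe_mem (x := ⟨_, hz.1⟩)).mpr z.toMul.2.1)
    have hφK : φ (z.toMul : G) =
        p.1 (Additive.ofMul (hσ.fstInf (Subgroup.inclusion inf_le_right ⟨_, hz⟩))) :=
      eq_on_commutator_of_coboundary_eq (ψ₁ := fun x : K => φ x)
        (fun x y => (hφ x y).symm.trans (sectionCocycle_apply_of_mem_right hcomm hσ p x y))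
        ((mem_commutator_iff_coe_mem (x := ⟨_, hz.2⟩)).mpr z.toMul.2.2)
    rw [hσ.fstInf_inclusion] at hφK
    exact hφK.symm.trans hφH
  · refine abTensor_quotient_hom_ext fun x y => ?_
    have hxy := sectionCocycle_apply_sub_apply_swap hcomm hσ p x.2 y.2
    rw [hφ, hφ, (hcomm x x.2 y y.2).eq, add_comm (φ x), sub_self] at hxy
    exact hxy.symm

theorem H2mk_sectionCocycle_eq_zero [K.Normal] [DivisibleBy D ℤ] (hprod : H ⊔ K = ⊤)
    (h₁ : restrictToZ H K p.1 = 0) (h₂ : p.2 = 0) : H2mk (sectionCocycle hcomm hσ p) = 0 := by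
  obtain ⟨u, v, huv⟩ := exists_add_of_restrictToZ_eq_zero p.1 h₁
  refine (H2mk_eq_zero_iff _).mpr (mem_coboundaries2_of_restrict hprod hcomm
    (sectionCocycle hcomm hσ p).2 (ψH := fun x => u (Additive.ofMul x))
    (ψK := fun k => p.1 (Additive.ofMul (hσ.fstInf k)) - v (Additive.ofMul k))
    (fun x y => ?_) (fun x y => ?_) (fun a => ?_) (fun x hx y hy => ?_))
  · rw [sectionCocycle_apply_of_mem_left hcomm hσ p x.2 y.2, ofMul_mul, map_add, sub_self]
  · rw [sectionCocycle_apply_of_mem_right hcomm hσ p, ofMul_mul x, map_add]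
    abel
  · rw [hσ.fstInf_inclusion, huv, add_sub_cancel_right]
  · rw [← sub_eq_zero, sectionCocycle_apply_sub_apply_swap hcomm hσ p hx hy, h₂]
    rfl

theorem exists_H2mk_sectionCocycle_eq [K.Normal] (hprod : H ⊔ K = ⊤) (f : cocycles2 G D)
    (hH : H2Map H.subtype (H2mk f) = 0) (hK : H2Map K.subtype (H2mk f) = 0) :
    ∃ p, H2mk (sectionCocycle hcomm hσ p) = H2mk f := by
  obtain ⟨φH, hφH⟩ := (H2Map_subtype_H2mk_eq_zero_iff _ _).mp hH
  obtain ⟨φK, hφK⟩ := (H2Map_subtype_H2mk_eq_zero_iff _ _).mp hK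
  let c : Additive ↥(H ⊓ K) →+ D :=
    homOfCoboundaryEq (ψ₁ := fun a => φK (Subgroup.inclusion inf_le_right a))
      (ψ₂ := fun a => φH (Subgroup.inclusion inf_le_left a))
      fun a b => (hφK _ _).symm.trans
        (hφH (Subgroup.inclusion inf_le_left a) (Subgroup.inclusion inf_le_left b))
  obtain ⟨β, hβ⟩ := exists_abTensor_hom_tmulAb (N := (H ⊓ K).subgroupOf H)
    (M := (H ⊓ K).subgroupOf K) (fun (x : H) (y : K) => (f : G → G → D) x y - (f : G → G → D) y x)
    (fun x₁ x₂ y => cocycle_sub_swap_mul_left f.2 (hcomm _ x₁.2 _ y.2) (hcomm _ x₂.2 _ y.2))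
    (fun x y₁ y₂ => cocycle_sub_swap_mul_right f.2 (hcomm _ x.2 _ y₁.2) (hcomm _ x.2 _ y₂.2))
    (fun x hx y => sub_eq_zero.mpr
      (apply_eq_apply_swap_of_coboundary hφK hx.2 y.2 (hcomm _ x.2 _ y.2)))
    (fun x y hy => sub_eq_zero.mpr
      (apply_eq_apply_swap_of_coboundary hφH x.2 hy.1 (hcomm _ x.2 _ y.2)))
  refine ⟨(c, β), ?_⟩
  rw [H2mk_eq_H2mk_iff]
  refine mem_coboundaries2_of_restrict hprod hcomm (f - sectionCocycle hcomm hσ (c, β)).2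
    (ψH := φH) (ψK := fun k => φK k - c (Additive.ofMul (hσ.fstInf k)))
    (fun x y => ?_) (fun x y => ?_) (fun a => ?_) (fun x hx y hy => ?_)
  · simp only [AddSubgroup.coe_sub, Pi.sub_apply]
    rw [sectionCocycle_apply_of_mem_left hcomm hσ _ x.2 y.2, sub_zero, hφH]
  · simp only [AddSubgroup.coe_sub, Pi.sub_apply]
    rw [sectionCocycle_apply_of_mem_right hcomm hσ, hφK]
    abel
  · rw [hσ.fstInf_inclusion]
    exact (sub_sub_cancel _ _).symm
  · have hswap := sectionCocycle_apply_sub_apply_swap hcomm hσ (c, β) hx hy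
    rw [hβ] at hswap
    simp only [AddSubgroup.coe_sub, Pi.sub_apply]
    linear_combination (norm := abel) -hswap

end Classification

theorem homZ_oplus_homTensor_embeds_general {G : Type} [Group G] (H K : Subgroup G) [K.Normal]
    (hprod : H ⊔ K = ⊤) (hcomm : ∀ h ∈ H, ∀ k ∈ K, Commute h k)
    (D : Type) [AddCommGroup D] [DivisibleBy D ℤ]
    [((H ⊓ K).subgroupOf H).Normal] [((H ⊓ K).subgroupOf K).Normal] :
    ∃ ι : ((Additive ↥(⁅H, H⁆ ⊓ ⁅K, K⁆) →+ D) ×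
        (AbTensor (↥H ⧸ (H ⊓ K).subgroupOf H) (↥K ⧸ (H ⊓ K).subgroupOf K) →+ D)) →+
      H2 G D,
      Function.Injective ι ∧
      ∀ ξ : H2 G D, ξ ∈ Set.range ι ↔ (H2Map H.subtype ξ = 0 ∧ H2Map K.subtype ξ = 0) := by
  obtain ⟨σ, hσ⟩ := exists_isMulSection hprod
  let ι₀ : _ →+ H2 G D := (QuotientAddGroup.mk' _).comp (sectionCocycle (D := D) hcomm hσ)
  let ρ := (restrictToZ (D := D) H K).prodMap
    (AddMonoidHom.id (AbTensor (↥H ⧸ (H ⊓ K).subgroupOf H) (↥K ⧸ (H ⊓ K).subgroupOf K) →+ D))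
  have hρ : Function.Surjective ρ :=
    Prod.map_surjective.mpr ⟨restrictToZ_surjective hcomm, Function.surjective_id⟩
  have hker : ι₀.ker = ρ.ker := by
    ext p
    change H2mk (sectionCocycle hcomm hσ p) = 0 ↔ (restrictToZ H K p.1, p.2) = 0
    rw [Prod.mk_eq_zero]
    exact ⟨restrictToZ_eq_zero_of_H2mk_sectionCocycle_eq_zero hcomm hσ p,
      fun h => H2mk_sectionCocycle_eq_zero hcomm hσ p hprod h.1 h.2⟩
  obtain ⟨ι, hinj, hrange⟩ := exists_injective_range_eq ρ hρ ι₀ hker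
  refine ⟨ι, hinj, fun ξ => ?_⟩
  obtain ⟨f, rfl⟩ := QuotientAddGroup.mk_surjective ξ
  rw [hrange]
  refine ⟨?_, fun h => exists_H2mk_sectionCocycle_eq hcomm hσ hprod f h.1 h.2⟩
  rintro ⟨p, hp⟩
  rw [← hp]
  exact ⟨H2Map_subtype_left_sectionCocycle hcomm hσ p,
    H2Map_subtype_right_sectionCocycle hcomm hσ p⟩

/-- There is an injective homomorphism `Hom(Z, D) ⊕ Hom(H/A ⊗ K/A, D) → H²(G, D)`
whose image is the kernel of `(res, res) : H²(G, D) → H²(H, D) ⊕ H²(K, D)`.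
In particular `Hom(Z, D) ⊕ Hom(H/A ⊗ K/A, D)` embeds in `H²(G, D)`. -/
theorem homZ_oplus_homTensor_embeds {G : Type} [Group G] (H K : Subgroup G) [H.Normal] [K.Normal]
    (hprod : H ⊔ K = ⊤) (hcomm : ∀ h ∈ H, ∀ k ∈ K, Commute h k)
    (D : Type) [AddCommGroup D] [DivisibleBy D ℤ]
    [((H ⊓ K).subgroupOf H).Normal] [((H ⊓ K).subgroupOf K).Normal] :
    ∃ ι : ((Additive ↥(⁅H, H⁆ ⊓ ⁅K, K⁆) →+ D) ×
        (AbTensor (↥H ⧸ (H ⊓ K).subgroupOf H) (↥K ⧸ (H ⊓ K).subgroupOf K) →+ D)) →+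
      H2 G D,
      Function.Injective ι ∧
      ∀ ξ : H2 G D, ξ ∈ Set.range ι ↔ (H2Map H.subtype ξ = 0 ∧ H2Map K.subtype ξ = 0) :=
  homZ_oplus_homTensor_embeds_general H K hprod hcomm D

end SchurCP
end

section
/- Assume Z = [H,H] ∩ [K,K] = 1. Let ξ ∈ H²(G, D) with θ'(ξ) = (ξ₁, ξ₂, t), and suppose that either the restriction of ξ₁ to A is 0 or the restriction of ξ₂ to A is 0. Then the following are equivalent: (i) ξ lies in the image of the inflation map H²(G/A, D) → H²(G, D); (ii) t(h[H,H] ⊗ a[K,K]) = 0 and t(a[H,H] ⊗ k[K,K]) = 0 for all h ∈ H, k ∈ K, a ∈ A; (iii) ψ_A(ξ₁) = 0 and ψ_A(ξ₂) = 0, where for a group X with central subgroup A and η ∈ H²(X, D) represented by a 2-cocycle f, ψ_A(η) ∈ Hom((X/[X,X]) ⊗ A, D) is defined by ψ_A(η)(x[X,X] ⊗ a) = f(x, a) − f(a, x). -/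
/-!
Setting (central products): `G` is a group with normal subgroups `H` and `K` such that
`G = HK` (i.e. `H ⊔ K = ⊤`) and `[H, K] = 1` (i.e. every element of `H` commutes with
every element of `K`).  We set `A = H ⊓ K` and `Z = ⁅H,H⁆ ⊓ ⁅K,K⁆`; both are central
in `G`.  Coefficients are taken in a divisible abelian group `D`, regarded as a trivial
module.  Second cohomology `H2 X D` is realized concretely as (inhomogeneous)
2-cocycles modulo 2-coboundaries, and `Hom(X, D)` is realized as `Additive X →+ D`.
-/

open scoped TensorProduct

set_option maxHeartbeats 1000000
set_option synthInstance.maxHeartbeats 1000000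
set_option synthInstance.maxSize 2000

namespace SchurCP

variable (G : Type) [Group G] (D : Type) [AddCommGroup D]

variable {G D}

/-!
Every element of `A = H ∩ K` commutes with `H` and with `K`, hence with `H ⊔ K = G`, so `A`
is central. For a central subgroup `A`, the class of a cocycle `f` is inflated from `G/A` iff
it restricts to zero on `A` and `f x a = f a x` for `x ∈ G`, `a ∈ A`: correcting `f` by a
coboundary makes `f (·, a)` constant, and the symmetry then makes `f` invariant under right
multiplication by `A` in both arguments, so that it descends to `G/A`. For central `a`,
`x ↦ f x a - f a x` is a homomorphism, so the symmetry on `G = H ⊔ K` amounts to the symmetry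
on `H` and on `K`. That is condition (ii) through `ν`, and condition (iii) because the symmetry
does not depend on the representing cocycle.
-/

theorem H2mk_surjective : Function.Surjective (H2mk : cocycles2 G D → H2 G D) :=
  QuotientAddGroup.mk_surjective

theorem H2Map_mk {G' : Type} [Group G'] (π : G' →* G) (f : cocycles2 G D) :
    H2Map π (H2mk f) = H2mk (pullCocycle π f) := rfl

theorem H2Map_comp {G' G'' : Type} [Group G'] [Group G''] (π : G' →* G) (ρ : G'' →* G') :
    H2Map (π.comp ρ) = (H2Map ρ).comp (H2Map π : H2 G D →+ H2 G' D) :=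
  AddMonoidHom.ext fun ξ => by obtain ⟨f, rfl⟩ := H2mk_surjective ξ; rfl

def coboundary (φ : G → D) : cocycles2 G D :=
  ⟨fun x y => φ x + φ y - φ (x * y), fun x y z => by simp only [mul_assoc]; abel⟩

theorem coboundary_apply (φ : G → D) (x y : G) :
    (coboundary φ).1 x y = φ x + φ y - φ (x * y) := rfl

theorem H2mk_eq_H2mk_iff_s14 {f f' : cocycles2 G D} :
    H2mk f = H2mk f' ↔ ∃ φ : G → D, f = f' + coboundary φ := by
  change (QuotientAddGroup.mk f : cocycles2 G D ⧸ _) = QuotientAddGroup.mk f' ↔ _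
  rw [QuotientAddGroup.eq_iff_sub_mem, AddSubgroup.mem_addSubgroupOf]
  constructor
  · rintro ⟨φ, hφ⟩
    refine ⟨φ, Subtype.ext (funext₂ fun x y => ?_)⟩
    have := hφ x y
    simp only [AddSubgroup.coe_sub, Pi.sub_apply] at this
    simp only [AddSubgroup.coe_add, Pi.add_apply, coboundary_apply, ← this]
    abel
  · rintro ⟨φ, rfl⟩
    exact ⟨φ, fun x y => by simp only [AddSubgroup.coe_sub, AddSubgroup.coe_add, Pi.sub_apply,
      Pi.add_apply, coboundary_apply]; abel⟩

theorem H2mk_add_coboundary (f : cocycles2 G D) (φ : G → D) :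
    H2mk (f + coboundary φ) = H2mk f :=
  H2mk_eq_H2mk_iff_s14.2 ⟨φ, rfl⟩

theorem H2Map_one {G' : Type} [Group G'] : H2Map (1 : G' →* G) = (0 : H2 G D →+ H2 G' D) := by
  refine AddMonoidHom.ext fun ξ => ?_
  obtain ⟨f, rfl⟩ := H2mk_surjective ξ
  have : pullCocycle (1 : G' →* G) f = 0 + coboundary fun _ => f.1 1 1 := by
    ext x y
    simp [pullCocycle, coboundary_apply]
  rw [AddMonoidHom.zero_apply, H2Map_mk, this, H2mk_add_coboundary]
  rfl

theorem H2Map_subtype_eq_zero_of_subgroupOf {A B : Subgroup G} (hAB : A ≤ B) {ξ : H2 G D}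
    (h : H2Map (A.subgroupOf B).subtype (H2Map B.subtype ξ) = 0) : H2Map A.subtype ξ = 0 := by
  have hA : A.subtype = (B.subtype.comp (A.subgroupOf B).subtype).comp
      (Subgroup.subgroupOfEquivOfLe hAB).symm.toMonoidHom := rfl
  rw [hA, H2Map_comp, H2Map_comp, AddMonoidHom.comp_apply, AddMonoidHom.comp_apply, h, map_zero]

theorem cocycle_one_left (f : cocycles2 G D) (x : G) : f.1 1 x = f.1 1 1 := by
  simpa using (f.2 1 1 x).symm

theorem cocycle_one_right (f : cocycles2 G D) (x : G) : f.1 x 1 = f.1 1 1 := by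
  simpa using f.2 x 1 1

theorem coboundary_swap (φ : G → D) {x y : G} (h : Commute x y) :
    (coboundary φ).1 x y = (coboundary φ).1 y x := by
  rw [coboundary_apply, coboundary_apply, h.eq, add_comm (φ x)]

theorem swap_eq_iff_of_H2mk_eq {f f' : cocycles2 G D} (hf : H2mk f = H2mk f') {x y : G}
    (h : Commute x y) : f.1 x y = f.1 y x ↔ f'.1 x y = f'.1 y x := by
  obtain ⟨φ, rfl⟩ := H2mk_eq_H2mk_iff_s14.1 hf
  simp only [AddSubgroup.coe_add, Pi.add_apply, coboundary_swap φ h, add_left_inj]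

theorem cocycle_swap_mul (f : cocycles2 G D) {a : G} (ha : a ∈ Subgroup.center G) (x y : G) :
    f.1 (x * y) a - f.1 a (x * y) = (f.1 x a - f.1 a x) + (f.1 y a - f.1 a y) := by
  have h₁ := f.2 x y a
  have h₂ := f.2 x a y
  have h₃ := f.2 a x y
  rw [← Subgroup.mem_center_iff.1 ha y] at h₂
  rw [← Subgroup.mem_center_iff.1 ha x] at h₃
  linear_combination (norm := abel) h₁ - h₂ + h₃

/-- `x ↦ ψ_A(f)(x ⊗ a)`, in the notation of the statement. -/
def swapHom (f : cocycles2 G D) {a : G} (ha : a ∈ Subgroup.center G) : G →* Multiplicative D :=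
  MonoidHom.mk' (fun x => Multiplicative.ofAdd (f.1 x a - f.1 a x)) fun x y => by
    rw [cocycle_swap_mul f ha]
    rfl

theorem mem_ker_swapHom (f : cocycles2 G D) {a : G} (ha : a ∈ Subgroup.center G) (x : G) :
    x ∈ (swapHom f ha).ker ↔ f.1 x a = f.1 a x := by
  rw [MonoidHom.mem_ker, ← ofAdd_zero]
  exact Multiplicative.ofAdd.injective.eq_iff.trans sub_eq_zero

theorem forall_swap_eq_iff_of_sup_eq_top {H K A : Subgroup G} (hHK : H ⊔ K = ⊤)
    (hA : A ≤ Subgroup.center G) (f : cocycles2 G D) :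
    (∀ x, ∀ a ∈ A, f.1 x a = f.1 a x) ↔
      (∀ x ∈ H, ∀ a ∈ A, f.1 x a = f.1 a x) ∧ ∀ x ∈ K, ∀ a ∈ A, f.1 x a = f.1 a x := by
  refine ⟨fun h => ⟨fun x _ => h x, fun x _ => h x⟩, fun ⟨hH, hK⟩ x a ha => ?_⟩
  have hker : H ⊔ K ≤ (swapHom f (hA ha)).ker :=
    sup_le (fun y hy => (mem_ker_swapHom f _ y).2 (hH y hy a ha))
      (fun y hy => (mem_ker_swapHom f _ y).2 (hK y hy a ha))
  exact (mem_ker_swapHom f _ x).1 (hker (hHK ▸ Subgroup.mem_top x))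

theorem exists_pullCocycle_mk'_eq (A : Subgroup G) [A.Normal] (f : cocycles2 G D)
    (hf : ∀ x y, ∀ a ∈ A, f.1 (x * a) y = f.1 x y ∧ f.1 x (y * a) = f.1 x y) :
    ∃ F : cocycles2 (G ⧸ A) D, pullCocycle (QuotientGroup.mk' A) F = f := by
  have hwd : ∀ x y x' y', x⁻¹ * x' ∈ A → y⁻¹ * y' ∈ A → f.1 x y = f.1 x' y' := by
    intro x y x' y' hx hy
    calc f.1 x y = f.1 (x * (x⁻¹ * x')) (y * (y⁻¹ * y')) := by
          rw [(hf _ _ _ hy).2, (hf _ _ _ hx).1]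
      _ = f.1 x' y' := by rw [mul_inv_cancel_left, mul_inv_cancel_left]
  let F : G ⧸ A → G ⧸ A → D := Quotient.lift₂ f.1 fun x y x' y' hx hy =>
    hwd x y x' y' (QuotientGroup.leftRel_apply.1 hx) (QuotientGroup.leftRel_apply.1 hy)
  refine ⟨⟨F, fun u v w => ?_⟩, rfl⟩
  induction u using QuotientGroup.induction_on
  induction v using QuotientGroup.induction_on
  induction w using QuotientGroup.induction_on
  exact f.2 _ _ _

theorem exists_sub_coboundary_apply_eq (A : Subgroup G) (f : cocycles2 G D)
    (hf : H2Map A.subtype (H2mk f) = 0) :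
    ∃ φ : G → D, ∀ x, ∀ a ∈ A, (f - coboundary φ).1 x a = (f - coboundary φ).1 1 a := by
  obtain ⟨φ₀, hφ₀⟩ := H2mk_eq_H2mk_iff_s14.1 (hf.trans (QuotientAddGroup.mk_zero _).symm)
  let s : G → G := fun x => (x : G ⧸ A).out
  let n : G → A := fun x =>
    ⟨(s x)⁻¹ * x, QuotientGroup.eq.1 (QuotientGroup.out_eq' (x : G ⧸ A))⟩
  let φ : G → D := fun x => φ₀ (n x) - f.1 (s x) (n x)
  have key : ∀ x (a : A), f.1 x a = φ x + φ₀ a - φ (x * a) := by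
    intro x a
    have hs : s (x * a) = s x := by simp only [s, QuotientGroup.mk_mul_of_mem x a.2]
    have hn : n (x * a) = n x * a :=
      Subtype.ext (by simp only [n, hs, Subgroup.coe_mul, mul_assoc])
    have hA : f.1 (n x) a = φ₀ (n x) + φ₀ a - φ₀ (n x * a) := by
      have := congrFun₂ (congrArg Subtype.val hφ₀) (n x) a
      rwa [zero_add] at this
    have hcoc := f.2 (s x) (n x) a
    simp only [φ, hs, hn, Subgroup.coe_mul, show s x * n x = x from mul_inv_cancel_left _ _]
      at hcoc ⊢
    linear_combination (norm := abel) hcoc + hA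
  refine ⟨φ, fun x a ha => ?_⟩
  simp only [AddSubgroup.coe_sub, Pi.sub_apply, coboundary_apply, one_mul]
  rw [key x ⟨a, ha⟩, key 1 ⟨a, ha⟩, one_mul]
  abel

theorem cocycle_mul_apply_eq (f : cocycles2 G D) {a : G} (ha : a ∈ Subgroup.center G)
    (hconst : ∀ x, f.1 x a = f.1 1 a) (hswap : ∀ x, f.1 x a = f.1 a x) (x y : G) :
    f.1 (x * a) y = f.1 x y ∧ f.1 x (y * a) = f.1 x y := by
  have hright : f.1 x (y * a) = f.1 x y := by
    linear_combination (norm := abel) -(f.2 x y a) + hconst (x * y) - hconst y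
  refine ⟨?_, hright⟩
  have hcoc := f.2 x a y
  rw [← Subgroup.mem_center_iff.1 ha y, hright] at hcoc
  linear_combination (norm := abel) hcoc - hconst x + hconst y - hswap y

theorem H2mk_mem_range_H2Map_mk'_iff (A : Subgroup G) [A.Normal] (hA : A ≤ Subgroup.center G)
    (f : cocycles2 G D) :
    H2mk f ∈ Set.range (H2Map (QuotientGroup.mk' A) : H2 (G ⧸ A) D →+ H2 G D) ↔
      H2Map A.subtype (H2mk f) = 0 ∧ ∀ x, ∀ a ∈ A, f.1 x a = f.1 a x := by
  have hcomm : ∀ x, ∀ a ∈ A, Commute x a := fun x a ha => Subgroup.mem_center_iff.1 (hA ha) x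
  constructor
  · rintro ⟨η, hη⟩
    obtain ⟨F, rfl⟩ := H2mk_surjective η
    have htriv : (QuotientGroup.mk' A).comp A.subtype = 1 :=
      MonoidHom.ext fun a => (QuotientGroup.eq_one_iff _).2 a.2
    refine ⟨by rw [← hη, ← AddMonoidHom.comp_apply, ← H2Map_comp, htriv, H2Map_one]; rfl,
      fun x a ha => ?_⟩
    rw [swap_eq_iff_of_H2mk_eq hη.symm (hcomm x a ha)]
    change F.1 x a = F.1 a x
    rw [(QuotientGroup.eq_one_iff a).2 ha, cocycle_one_left, cocycle_one_right]
  · rintro ⟨hres, hswap⟩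
    obtain ⟨φ, hφ⟩ := exists_sub_coboundary_apply_eq A f hres
    have hf : H2mk (f - coboundary φ) = H2mk f := by
      rw [← H2mk_add_coboundary (f - coboundary φ) φ, sub_add_cancel]
    obtain ⟨F, hF⟩ := exists_pullCocycle_mk'_eq A (f - coboundary φ) fun x y a ha =>
      cocycle_mul_apply_eq _ (hA ha) (fun z => hφ z a ha)
        (fun z => (swap_eq_iff_of_H2mk_eq hf (hcomm z a ha)).2 (hswap z a ha)) x y
    exact ⟨H2mk F, by rw [H2Map_mk, hF, hf]⟩

theorem inf_le_center_of_sup_eq_top {H K : Subgroup G} (hHK : H ⊔ K = ⊤)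
    (hcomm : ∀ h ∈ H, ∀ k ∈ K, Commute h k) : H ⊓ K ≤ Subgroup.center G := by
  intro a ha
  have hcent : H ⊔ K ≤ Subgroup.centralizer {a} := by
    refine sup_le (fun h hh => ?_) (fun k hk => ?_) <;>
      rw [Subgroup.mem_centralizer_singleton_iff]
    · exact (hcomm h hh a ha.2).eq
    · exact (hcomm a ha.1 k hk).eq.symm
  rw [hHK, top_le_iff, Subgroup.centralizer_eq_top_iff_subset] at hcent
  exact hcent rfl

theorem forall_H2mk_eq_H2Map_subtype_swap_iff {A B : Subgroup G} (hAB : A ≤ B)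
    (hA : A ≤ Subgroup.center G) (f : cocycles2 G D) :
    (∀ f' : cocycles2 B D, H2mk f' = H2Map B.subtype (H2mk f) →
        ∀ (x : B) (a : A),
          f'.1 x (Subgroup.inclusion hAB a) = f'.1 (Subgroup.inclusion hAB a) x) ↔
      ∀ (x : B) (a : A), f.1 x a = f.1 a x :=
  ⟨fun h => h _ rfl, fun h _ hf' x a =>
    (swap_eq_iff_of_H2mk_eq hf' (Subtype.ext (Subgroup.mem_center_iff.1 (hA a.2) x))).2 (h x a)⟩

theorem inflation_image_tfae_general {G : Type} [Group G] (H K : Subgroup G)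
    (hprod : H ⊔ K = ⊤) (hcomm : ∀ h ∈ H, ∀ k ∈ K, Commute h k)
    (D : Type) [AddCommGroup D]
    [(H ⊓ K).Normal]
    (ν : H2 G D →+ (AbTensor ↥H ↥K →+ D))
    (hν : ∀ f : cocycles2 G D, ∀ (h : ↥H) (k : ↥K),
      ν (H2mk f) (tmulAb h k) = (f : G → G → D) ↑h ↑k - (f : G → G → D) ↑k ↑h)
    (ξ : H2 G D)
    (hres : H2Map ((H ⊓ K).subgroupOf H).subtype (H2Map H.subtype ξ) = 0 ∨
            H2Map ((H ⊓ K).subgroupOf K).subtype (H2Map K.subtype ξ) = 0) :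
    ((ξ ∈ Set.range (H2Map (QuotientGroup.mk' (H ⊓ K)) : H2 (G ⧸ (H ⊓ K)) D →+ H2 G D)) ↔
      ((∀ (h : ↥H) (a : ↥(H ⊓ K)),
          ν ξ (tmulAb h (Subgroup.inclusion inf_le_right a)) = 0) ∧
       (∀ (k : ↥K) (a : ↥(H ⊓ K)),
          ν ξ (tmulAb (Subgroup.inclusion inf_le_left a) k) = 0))) ∧
    (((∀ (h : ↥H) (a : ↥(H ⊓ K)),
          ν ξ (tmulAb h (Subgroup.inclusion inf_le_right a)) = 0) ∧
       (∀ (k : ↥K) (a : ↥(H ⊓ K)),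
          ν ξ (tmulAb (Subgroup.inclusion inf_le_left a) k) = 0)) ↔
      ((∀ f : cocycles2 ↥H D, H2mk f = H2Map H.subtype ξ →
          ∀ (x : ↥H) (a : ↥(H ⊓ K)),
            (f : ↥H → ↥H → D) x (Subgroup.inclusion inf_le_left a) =
            (f : ↥H → ↥H → D) (Subgroup.inclusion inf_le_left a) x) ∧
       (∀ f : cocycles2 ↥K D, H2mk f = H2Map K.subtype ξ →
          ∀ (y : ↥K) (a : ↥(H ⊓ K)),
            (f : ↥K → ↥K → D) y (Subgroup.inclusion inf_le_right a) =
            (f : ↥K → ↥K → D) (Subgroup.inclusion inf_le_right a) y))) := by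
  obtain ⟨f, rfl⟩ := H2mk_surjective ξ
  have hA := inf_le_center_of_sup_eq_top hprod hcomm
  have hresA : H2Map (H ⊓ K).subtype (H2mk f) = 0 :=
    hres.elim (H2Map_subtype_eq_zero_of_subgroupOf inf_le_left)
      (H2Map_subtype_eq_zero_of_subgroupOf inf_le_right)
  rw [H2mk_mem_range_H2Map_mk'_iff _ hA, forall_swap_eq_iff_of_sup_eq_top hprod hA,
    forall_H2mk_eq_H2Map_subtype_swap_iff inf_le_left hA,
    forall_H2mk_eq_H2Map_subtype_swap_iff inf_le_right hA]
  simp only [hν, sub_eq_zero, hresA, true_and, Subgroup.coe_inclusion, Subtype.forall]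
  exact ⟨and_congr_right' (forall₄_congr fun _ _ _ _ => eq_comm),
    and_congr_right' (forall₄_congr fun _ _ _ _ => eq_comm)⟩

/-- Assume `Z = 1`, let `θ'(ξ) = (ξ₁, ξ₂, t)` and suppose `ξ₁` restricts trivially
to `A` or `ξ₂` restricts trivially to `A`.  Then the following are equivalent:
(i) `ξ` is inflated from `G/A`; (ii) `t` vanishes on `H ⊗ A` and on `A ⊗ K`;
(iii) `ψ_A(ξ₁) = 0` and `ψ_A(ξ₂) = 0`, where `ψ_A(η)(x ⊗ a) = f(x,a) - f(a,x)` for a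
(equivalently, any) 2-cocycle `f` representing `η`. -/
theorem inflation_image_tfae {G : Type} [Group G] (H K : Subgroup G) [H.Normal] [K.Normal]
    (hprod : H ⊔ K = ⊤) (hcomm : ∀ h ∈ H, ∀ k ∈ K, Commute h k)
    (D : Type) [AddCommGroup D] [DivisibleBy D ℤ]
    [(H ⊓ K).Normal]
    (hZ : ⁅H, H⁆ ⊓ ⁅K, K⁆ = ⊥)
    (ν : H2 G D →+ (AbTensor ↥H ↥K →+ D))
    (hν : ∀ f : cocycles2 G D, ∀ (h : ↥H) (k : ↥K),
      ν (H2mk f) (tmulAb h k) = (f : G → G → D) ↑h ↑k - (f : G → G → D) ↑k ↑h)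
    (ξ : H2 G D)
    (hres : H2Map ((H ⊓ K).subgroupOf H).subtype (H2Map H.subtype ξ) = 0 ∨
            H2Map ((H ⊓ K).subgroupOf K).subtype (H2Map K.subtype ξ) = 0) :
    ((ξ ∈ Set.range (H2Map (QuotientGroup.mk' (H ⊓ K)) : H2 (G ⧸ (H ⊓ K)) D →+ H2 G D)) ↔
      ((∀ (h : ↥H) (a : ↥(H ⊓ K)),
          ν ξ (tmulAb h (Subgroup.inclusion inf_le_right a)) = 0) ∧
       (∀ (k : ↥K) (a : ↥(H ⊓ K)),
          ν ξ (tmulAb (Subgroup.inclusion inf_le_left a) k) = 0))) ∧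
    (((∀ (h : ↥H) (a : ↥(H ⊓ K)),
          ν ξ (tmulAb h (Subgroup.inclusion inf_le_right a)) = 0) ∧
       (∀ (k : ↥K) (a : ↥(H ⊓ K)),
          ν ξ (tmulAb (Subgroup.inclusion inf_le_left a) k) = 0)) ↔
      ((∀ f : cocycles2 ↥H D, H2mk f = H2Map H.subtype ξ →
          ∀ (x : ↥H) (a : ↥(H ⊓ K)),
            (f : ↥H → ↥H → D) x (Subgroup.inclusion inf_le_left a) =
            (f : ↥H → ↥H → D) (Subgroup.inclusion inf_le_left a) x) ∧
       (∀ f : cocycles2 ↥K D, H2mk f = H2Map K.subtype ξ →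
          ∀ (y : ↥K) (a : ↥(H ⊓ K)),
            (f : ↥K → ↥K → D) y (Subgroup.inclusion inf_le_right a) =
            (f : ↥K → ↥K → D) (Subgroup.inclusion inf_le_right a) y))) :=
  inflation_image_tfae_general H K hprod hcomm D ν hν ξ hres

end SchurCP
end
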